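/- Two infinite SAWs avoid each other with probability at least A^{−1}: if η₁^∞ and η₂^∞ are independent infinite self-avoiding walks from 0 (each being the weak limit of uniform finite SAWs) and c_n ~ A μ^n, then P(η₁^∞[1,∞) ∩ η₂^∞[1,∞) = ∅) ≥ A^{−1} > 0. -/

import Mathlib

open MeasureTheory Filter Topology

/-- `x` and `y` are nearest neighbours in `ℤ^d`. -/
def IsNbr (d : ℕ) (x y : Fin d → ℤ) : Prop :=
  (∑ j, (x j - y j).natAbs) = 1

/-- Self-avoiding paths of length `n` in `ℤ^d` started at the origin,
encoded as functions `ℕ → ℤ^d` frozen after time `n`. -/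
def SAWset (d n : ℕ) : Set (ℕ → Fin d → ℤ) :=
  {ω | ω 0 = 0 ∧ (∀ i < n, IsNbr d (ω (i + 1)) (ω i)) ∧
    (∀ i ≤ n, ∀ j ≤ n, ω i = ω j → i = j) ∧ ∀ i, n ≤ i → ω i = ω n}

/-- The number `c_n` of `n`-step self-avoiding paths. -/
noncomputable def cSAW (d n : ℕ) : ℕ := Nat.card (SAWset d n)

/-- The cylinder event that a path starts with `ζ` up to time `k`. -/
def startSet (d k : ℕ) (ζ : ℕ → Fin d → ℤ) : Set (ℕ → Fin d → ℤ) :=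
  {ω | ∀ i ≤ k, ω i = ζ i}

/-- The event that a path (translated to start at `ζ k`) escapes `ζ`. -/
def escSet (d k : ℕ) (ζ : ℕ → Fin d → ℤ) : Set (ℕ → Fin d → ℤ) :=
  {ω | ∀ i, 1 ≤ i → ∀ j ≤ k, ω i + ζ k ≠ ζ j}

/-- `c_m(ζ)`: the number of `m`-step self-avoiding paths starting with `ζ`. -/
noncomputable def cExt (d m k : ℕ) (ζ : ℕ → Fin d → ℤ) : ℕ :=
  Nat.card ((SAWset d m ∩ startSet d k ζ : Set (ℕ → Fin d → ℤ)))

/-- Infinite self-avoiding paths started at the origin. -/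
def InfSAW (d : ℕ) : Set (ℕ → Fin d → ℤ) :=
  {ω | ω 0 = 0 ∧ (∀ i, IsNbr d (ω (i + 1)) (ω i)) ∧ Function.Injective ω}

/-- The `m`-fold shift `T^m`: `(T^m ω)(i) = ω(m+i) − ω(m)`. -/
def shiftW (d m : ℕ) (ω : ℕ → Fin d → ℤ) : ℕ → Fin d → ℤ :=
  fun i => ω (m + i) - ω m

/-- The shift operator `T`. -/
def Tsh (d : ℕ) (ω : ℕ → Fin d → ℤ) : ℕ → Fin d → ℤ :=
  fun i => ω (i + 1) - ω 1

/-!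
Split a `2n`-step self-avoiding walk at its midpoint: the first half read backwards and the
second half are two `n`-step walks from the origin that avoid each other, and the split is
injective. Grouping the pairs by their first `m ≤ n` steps gives `c_{2n} ≤ ∑ c_n(ζ₁) c_n(ζ₂)`,
summed over pairs `(ζ₁, ζ₂)` of mutually avoiding `m`-step walks. After division by `c_n²`, the
left side tends to `A⁻¹` as `n → ∞`, and by weak convergence the right side tends to
`∑ P(ζ₁) P(ζ₂)`, which is at most the `P ⊗ P`-probability that the first `m` steps of the two
walks avoid each other. Letting `m → ∞` and using continuity from above gives the bound.
-/

namespace IsNbr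

variable {d : ℕ} {x y : Fin d → ℤ}

lemma symm (h : IsNbr d x y) : IsNbr d y x := by
  unfold IsNbr at *
  rw [← h]
  exact Finset.sum_congr rfl fun j _ => by omega

lemma sub_right (h : IsNbr d x y) (c : Fin d → ℤ) : IsNbr d (x - c) (y - c) := by
  simpa [IsNbr] using h

lemma natAbs_sub_le_one (h : IsNbr d x y) (j : Fin d) : (x j - y j).natAbs ≤ 1 :=
  h ▸ Finset.single_le_sum (f := fun j => (x j - y j).natAbs) (fun _ _ => Nat.zero_le _)
    (Finset.mem_univ j)

end IsNbr

section Walks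

variable {d m n : ℕ} {ω : ℕ → Fin d → ℤ}

lemma natAbs_apply_le_of_mem_SAWset (hω : ω ∈ SAWset d n) {i : ℕ} (hi : i ≤ n) (j : Fin d) :
    (ω i j).natAbs ≤ i := by
  induction i with
  | zero => simp [hω.1]
  | succ i ih =>
    have hstep := (hω.2.1 i hi).natAbs_sub_le_one j
    have hprev := ih (by omega)
    omega

lemma finite_SAWset (d n : ℕ) : (SAWset d n).Finite := by
  have hbox : (Set.univ.pi fun _ : Fin (n + 1) =>
      Set.univ.pi fun _ : Fin d => Set.Icc (-n : ℤ) n).Finite :=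
    Set.Finite.pi fun _ => Set.Finite.pi fun _ => Set.finite_Icc _ _
  refine Set.Finite.of_finite_image (f := fun ω (i : Fin (n + 1)) => ω i) (hbox.subset ?_) ?_
  · rintro _ ⟨ω, hω, rfl⟩ i - j -
    have := natAbs_apply_le_of_mem_SAWset hω (Nat.lt_succ_iff.mp i.isLt) j
    simp only [Set.mem_Icc]
    omega
  · intro ω hω ω' hω' h
    have hle : ∀ i ≤ n, ω i = ω' i := fun i hi => congrFun h ⟨i, by omega⟩
    funext i
    rcases le_total i n with hi | hi
    · exact hle i hi
    · rw [hω.2.2.2 i hi, hω'.2.2.2 i hi, hle n le_rfl]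

-- Truncated subtraction `n - i` freezes the reversed walk after time `n`.
def reverseW (d n : ℕ) (ω : ℕ → Fin d → ℤ) : ℕ → Fin d → ℤ :=
  fun i => ω (n - i) - ω n

lemma reverseW_mem_SAWset {N : ℕ} (hω : ω ∈ SAWset d N) (hn : n ≤ N) :
    reverseW d n ω ∈ SAWset d n := by
  obtain ⟨-, hnbr, hinj, -⟩ := hω
  refine ⟨by simp [reverseW], fun i hi => ?_, fun i hi j hj h => ?_, fun i hi => ?_⟩
  · have := hnbr (n - (i + 1)) (by omega)
    rw [show n - (i + 1) + 1 = n - i by omega] at this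
    exact this.symm.sub_right _
  · have := hinj (n - i) (by omega) (n - j) (by omega) (sub_left_injective h)
    omega
  · simp [reverseW, Nat.sub_eq_zero_of_le hi]

lemma shiftW_mem_SAWset {k : ℕ} (hω : ω ∈ SAWset d (n + k)) : shiftW d n ω ∈ SAWset d k := by
  obtain ⟨-, hnbr, hinj, hfrz⟩ := hω
  refine ⟨by simp [shiftW], fun i hi => ?_, fun i hi j hj h => ?_, fun i hi => ?_⟩
  · exact (hnbr (n + i) (by omega)).sub_right _
  · have := hinj (n + i) (by omega) (n + j) (by omega) (sub_left_injective h)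
    omega
  · simp only [shiftW, hfrz (n + i) (by omega)]

lemma injOn_reverseW_shiftW (d n : ℕ) :
    Set.InjOn (fun ω => (reverseW d n ω, shiftW d n ω)) {ω | ω 0 = 0} := by
  intro ω hω ω' hω' h
  obtain ⟨h₁, h₂⟩ := Prod.ext_iff.mp h
  have hn : ω n = ω' n := by
    simpa [reverseW, show ω 0 = 0 from hω, show ω' 0 = 0 from hω'] using congrFun h₁ n
  funext k
  rcases le_total k n with hk | hk
  · simpa [reverseW, hn, Nat.sub_sub_self hk] using congrFun h₁ (n - k)
  · simpa [shiftW, hn, Nat.add_sub_cancel' hk] using congrFun h₂ (k - n)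

def freezeW (d m : ℕ) (ω : ℕ → Fin d → ℤ) : ℕ → Fin d → ℤ :=
  fun i => ω (min i m)

lemma freezeW_mem_SAWset (hω : ω ∈ SAWset d n) (hmn : m ≤ n) : freezeW d m ω ∈ SAWset d m := by
  obtain ⟨h0, hnbr, hinj, -⟩ := hω
  refine ⟨by simpa [freezeW] using h0, fun i hi => ?_, fun i hi j hj h => ?_, fun i hi => ?_⟩
  · simpa [freezeW, Nat.min_eq_left (Nat.succ_le_of_lt hi), Nat.min_eq_left hi.le]
      using hnbr i (by omega)
  · simp only [freezeW, Nat.min_eq_left hi, Nat.min_eq_left hj] at h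
    exact hinj i (by omega) j (by omega) h
  · simp [freezeW, Nat.min_eq_right hi]

lemma mem_startSet_freezeW (d m : ℕ) (ω : ℕ → Fin d → ℤ) : ω ∈ startSet d m (freezeW d m ω) :=
  fun i hi => by simp [freezeW, Nat.min_eq_left hi]

lemma eq_of_mem_startSet {ζ ζ' : ℕ → Fin d → ℤ} (hζ : ζ ∈ SAWset d m) (hζ' : ζ' ∈ SAWset d m)
    (h : ω ∈ startSet d m ζ) (h' : ω ∈ startSet d m ζ') : ζ = ζ' := by
  have hle : ∀ i ≤ m, ζ i = ζ' i := fun i hi => (h i hi).symm.trans (h' i hi)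
  funext i
  rcases le_total i m with hi | hi
  · exact hle i hi
  · rw [hζ.2.2.2 i hi, hζ'.2.2.2 i hi, hle m le_rfl]

lemma measurableSet_startSet (d k : ℕ) (ζ : ℕ → Fin d → ℤ) : MeasurableSet (startSet d k ζ) :=
  MeasurableSet.pi (Set.to_countable (Set.Iic k)) fun _ _ => measurableSet_singleton _

end Walks

section Avoidance

variable {d m n : ℕ}

def avoidUpTo (d m : ℕ) : Set ((ℕ → Fin d → ℤ) × (ℕ → Fin d → ℤ)) :=
  {p | ∀ i, 1 ≤ i → i ≤ m → ∀ j, 1 ≤ j → j ≤ m → p.1 i ≠ p.2 j}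

lemma avoidUpTo_antitone (d : ℕ) : Antitone (avoidUpTo d) :=
  fun _ _ hab _ hp i hi him j hj hjm => hp i hi (him.trans hab) j hj (hjm.trans hab)

lemma iInter_avoidUpTo (d : ℕ) : ⋂ m, avoidUpTo d m =
    {p : (ℕ → Fin d → ℤ) × (ℕ → Fin d → ℤ) | ∀ i, 1 ≤ i → ∀ j, 1 ≤ j → p.1 i ≠ p.2 j} := by
  ext p
  simp only [Set.mem_iInter, avoidUpTo]
  exact ⟨fun h i hi j hj => h (max i j) i hi (le_max_left _ _) j hj (le_max_right _ _),
    fun h _ i hi _ j hj _ => h i hi j hj⟩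

lemma measurableSet_avoidUpTo (d m : ℕ) : MeasurableSet (avoidUpTo d m) := by
  simp only [avoidUpTo, Set.ofPred_forall]
  refine .iInter fun i => .iInter fun _ => .iInter fun _ => .iInter fun j => .iInter fun _ =>
    .iInter fun _ => (measurableSet_eq_fun ?_ ?_).compl
  · exact (measurable_pi_apply i).comp measurable_fst
  · exact (measurable_pi_apply j).comp measurable_snd

lemma reverseW_shiftW_mem_avoidUpTo {ω : ℕ → Fin d → ℤ} (hω : ω ∈ SAWset d (2 * n)) :
    (reverseW d n ω, shiftW d n ω) ∈ avoidUpTo d n := fun i hi hin j hj hjn h => by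
  have := hω.2.2.1 (n - i) (by omega) (n + j) (by omega) (sub_left_injective h)
  omega

noncomputable def avoidingPairs (d m : ℕ) : Finset ((ℕ → Fin d → ℤ) × (ℕ → Fin d → ℤ)) :=
  (((finite_SAWset d m).prod (finite_SAWset d m)).inter_of_left (avoidUpTo d m)).toFinset

lemma mem_avoidingPairs {p : (ℕ → Fin d → ℤ) × (ℕ → Fin d → ℤ)} :
    p ∈ avoidingPairs d m ↔ p ∈ (SAWset d m ×ˢ SAWset d m) ∩ avoidUpTo d m :=
  Set.Finite.mem_toFinset _

end Avoidance

section Counting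

variable {d m n : ℕ}

lemma cSAW_two_mul_le_ncard (d n : ℕ) :
    cSAW d (2 * n) ≤ ((SAWset d n ×ˢ SAWset d n) ∩ avoidUpTo d n).ncard := by
  have hsplit : (fun ω => (reverseW d n ω, shiftW d n ω)) '' SAWset d (2 * n) ⊆
      (SAWset d n ×ˢ SAWset d n) ∩ avoidUpTo d n := by
    rintro _ ⟨ω, hω, rfl⟩
    exact ⟨⟨reverseW_mem_SAWset hω (by omega), shiftW_mem_SAWset (by rwa [← two_mul])⟩,
      reverseW_shiftW_mem_avoidUpTo hω⟩
  calc cSAW d (2 * n) = (SAWset d (2 * n)).ncard := Nat.card_coe_set_eq _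
    _ = ((fun ω => (reverseW d n ω, shiftW d n ω)) '' SAWset d (2 * n)).ncard :=
      ((injOn_reverseW_shiftW d n).mono fun _ hω => hω.1).ncard_image.symm
    _ ≤ _ := Set.ncard_le_ncard hsplit
      (((finite_SAWset d n).prod (finite_SAWset d n)).inter_of_left _)

lemma ncard_avoidUpTo_le_sum_cExt (hmn : m ≤ n) :
    ((SAWset d n ×ˢ SAWset d n) ∩ avoidUpTo d m).ncard ≤
      ∑ p ∈ avoidingPairs d m, cExt d n m p.1 * cExt d n m p.2 := by
  set cyl := fun p : (ℕ → Fin d → ℤ) × (ℕ → Fin d → ℤ) =>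
    (SAWset d n ∩ startSet d m p.1) ×ˢ (SAWset d n ∩ startSet d m p.2)
  have hcover : (SAWset d n ×ˢ SAWset d n) ∩ avoidUpTo d m ⊆ ⋃ p ∈ avoidingPairs d m, cyl p := by
    rintro ⟨a, b⟩ ⟨⟨ha, hb⟩, hab⟩
    refine Set.mem_biUnion (x := (freezeW d m a, freezeW d m b)) (mem_avoidingPairs.mpr
      ⟨⟨freezeW_mem_SAWset ha hmn, freezeW_mem_SAWset hb hmn⟩, fun i hi him j hj hjm => ?_⟩)
      ⟨⟨ha, mem_startSet_freezeW d m a⟩, hb, mem_startSet_freezeW d m b⟩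
    simpa [freezeW, Nat.min_eq_left him, Nat.min_eq_left hjm] using hab i hi him j hj hjm
  have hfin : (⋃ p ∈ avoidingPairs d m, cyl p).Finite :=
    ((finite_SAWset d n).prod (finite_SAWset d n)).subset
      (Set.iUnion₂_subset fun _ _ => Set.prod_mono Set.inter_subset_left Set.inter_subset_left)
  calc _ ≤ (⋃ p ∈ avoidingPairs d m, cyl p).ncard := Set.ncard_le_ncard hcover hfin
    _ ≤ ∑ p ∈ avoidingPairs d m, (cyl p).ncard := Finset.set_ncard_biUnion_le _ _
    _ = _ := by simp only [cyl, Set.ncard_prod, cExt, Nat.card_coe_set_eq]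

lemma cSAW_two_mul_le_sum_cExt (hmn : m ≤ n) :
    cSAW d (2 * n) ≤ ∑ p ∈ avoidingPairs d m, cExt d n m p.1 * cExt d n m p.2 :=
  (cSAW_two_mul_le_ncard d n).trans <|
    (Set.ncard_le_ncard (Set.inter_subset_inter_right _ (avoidUpTo_antitone d hmn))
      (((finite_SAWset d n).prod (finite_SAWset d n)).inter_of_left _)).trans
    (ncard_avoidUpTo_le_sum_cExt hmn)

lemma cSAW_two_mul_div_sq_le (hmn : m ≤ n) :
    (cSAW d (2 * n) : ℝ) / (cSAW d n : ℝ) ^ 2 ≤ ∑ p ∈ avoidingPairs d m,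
      ((cExt d n m p.1 : ℝ) / cSAW d n) * ((cExt d n m p.2 : ℝ) / cSAW d n) := by
  calc (cSAW d (2 * n) : ℝ) / (cSAW d n : ℝ) ^ 2
      ≤ (∑ p ∈ avoidingPairs d m, (cExt d n m p.1 : ℝ) * cExt d n m p.2) / (cSAW d n : ℝ) ^ 2 :=
        div_le_div_of_nonneg_right (by exact_mod_cast cSAW_two_mul_le_sum_cExt hmn) (by positivity)
    _ = _ := by simp only [Finset.sum_div, div_mul_div_comm, sq]

end Counting

lemma tendsto_two_mul_div_sq {c : ℕ → ℝ} {A μ : ℝ} (hA : A ≠ 0) (hμ : μ ≠ 0)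
    (h : Tendsto (fun n => c n / (A * μ ^ n)) atTop (𝓝 1)) :
    Tendsto (fun n => c (2 * n) / c n ^ 2) atTop (𝓝 A⁻¹) := by
  have hlim := (h.comp (tendsto_id.const_mul_atTop' two_pos)).div ((h.pow 2).mul_const A)
    (by simpa using hA)
  rw [one_pow, one_mul, one_div] at hlim
  refine hlim.congr fun n => ?_
  rcases eq_or_ne (c n) 0 with hc | hc
  · simp [hc]
  · change c (2 * n) / (A * μ ^ (2 * n)) / ((c n / (A * μ ^ n)) ^ 2 * A) = _
    field_simp
    ring

lemma sum_measureReal_startSet_le {d : ℕ} (μ ν : Measure (ℕ → Fin d → ℤ)) [IsFiniteMeasure μ]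
    [IsFiniteMeasure ν] (m : ℕ) :
    ∑ p ∈ avoidingPairs d m, μ.real (startSet d m p.1) * ν.real (startSet d m p.2) ≤
      (μ.prod ν).real (avoidUpTo d m) := by
  have hdisj : Set.PairwiseDisjoint (avoidingPairs d m : Set _)
      fun p : (ℕ → Fin d → ℤ) × (ℕ → Fin d → ℤ) => startSet d m p.1 ×ˢ startSet d m p.2 := by
    intro p hp q hq hpq
    rw [Finset.mem_coe, mem_avoidingPairs] at hp hq
    refine Set.disjoint_left.mpr fun a ha ha' => hpq (Prod.ext ?_ ?_)
    · exact eq_of_mem_startSet hp.1.1 hq.1.1 ha.1 ha'.1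
    · exact eq_of_mem_startSet hp.1.2 hq.1.2 ha.2 ha'.2
  have hsub : ⋃ p ∈ avoidingPairs d m, startSet d m p.1 ×ˢ startSet d m p.2 ⊆ avoidUpTo d m := by
    refine Set.iUnion₂_subset fun p hp a ha i hi him j hj hjm => ?_
    rw [ha.1 i him, ha.2 j hjm]
    exact (mem_avoidingPairs.mp hp).2 i hi him j hj hjm
  calc _ = ∑ p ∈ avoidingPairs d m, (μ.prod ν).real (startSet d m p.1 ×ˢ startSet d m p.2) := by
        simp only [measureReal_prod_prod]
    _ = (μ.prod ν).real (⋃ p ∈ avoidingPairs d m, startSet d m p.1 ×ˢ startSet d m p.2) :=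
        (measureReal_biUnion_finset hdisj fun p _ =>
          (measurableSet_startSet d m p.1).prod (measurableSet_startSet d m p.2)).symm
    _ ≤ _ := measureReal_mono hsub

theorem infinite_saws_avoid_general (d : ℕ) (P : Measure (ℕ → Fin d → ℤ))
    [IsProbabilityMeasure P]
    (A μ : ℝ) (hA : 0 < A) (hμ : 0 < μ)
    (hasymp : Tendsto (fun n => (cSAW d n : ℝ) / (A * μ ^ n)) atTop (𝓝 1))
    (hweak : ∀ k (ζ : ℕ → Fin d → ℤ), ζ ∈ SAWset d k →
      Tendsto (fun n => (cExt d n k ζ : ℝ) / (cSAW d n)) atTop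
        (𝓝 ((P (startSet d k ζ)).toReal))) :
    A⁻¹ ≤ ((P.prod P) {p : (ℕ → Fin d → ℤ) × (ℕ → Fin d → ℤ) |
        ∀ i, 1 ≤ i → ∀ j, 1 ≤ j → p.1 i ≠ p.2 j}).toReal ∧ 0 < A⁻¹ := by
  refine ⟨?_, inv_pos.mpr hA⟩
  have hbound : ∀ m, A⁻¹ ≤ (P.prod P).real (avoidUpTo d m) := fun m => by
    have hsum := tendsto_finsetSum (avoidingPairs d m) fun p hp =>
      (hweak m p.1 (mem_avoidingPairs.mp hp).1.1).mul (hweak m p.2 (mem_avoidingPairs.mp hp).1.2)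
    exact (le_of_tendsto_of_tendsto (tendsto_two_mul_div_sq hA.ne' hμ.ne' hasymp) hsum
      (eventually_atTop.mpr ⟨m, fun n => cSAW_two_mul_div_sq_le⟩)).trans
      (sum_measureReal_startSet_le P P m)
  have hlim : Tendsto (fun m => (P.prod P).real (avoidUpTo d m)) atTop
      (𝓝 ((P.prod P).real (⋂ m, avoidUpTo d m))) :=
    (ENNReal.tendsto_toReal (measure_ne_top _ _)).comp (tendsto_measure_iInter_atTop
      (fun m => (measurableSet_avoidUpTo d m).nullMeasurableSet) (avoidUpTo_antitone d)
      ⟨0, measure_ne_top _ _⟩)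
  rw [iInter_avoidUpTo] at hlim
  exact ge_of_tendsto' hlim hbound

/-- two independent infinite SAWs avoid each other (after time 0)
with probability at least `A⁻¹ > 0`. -/
theorem infinite_saws_avoid (d : ℕ) (P : Measure (ℕ → Fin d → ℤ))
    [IsProbabilityMeasure P] (hsupp : P (InfSAW d) = 1)
    (A μ : ℝ) (hA : 0 < A) (hμ : 0 < μ)
    (hasymp : Tendsto (fun n => (cSAW d n : ℝ) / (A * μ ^ n)) atTop (𝓝 1))
    (hweak : ∀ k (ζ : ℕ → Fin d → ℤ), ζ ∈ SAWset d k →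
      Tendsto (fun n => (cExt d n k ζ : ℝ) / (cSAW d n)) atTop
        (𝓝 ((P (startSet d k ζ)).toReal))) :
    A⁻¹ ≤ ((P.prod P) {p : (ℕ → Fin d → ℤ) × (ℕ → Fin d → ℤ) |
        ∀ i, 1 ≤ i → ∀ j, 1 ≤ j → p.1 i ≠ p.2 j}).toReal ∧ 0 < A⁻¹ :=
  infinite_saws_avoid_general d P A μ hA hμ hasymp hweak
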